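/- Let X, X̃, Y be as in the model-free knockoff setting and let S ⊆ H_0 be any subset of null variables (j ∈ H_0 iff Y ⫫ X_j | X_{-j}). Then ((X, X̃)_{swap(S)}, Y) =_d ((X, X̃), Y). -/

import Mathlib

/-!
Since `X̃ ⫫ Y | X` and `X_j ⫫ Y | X_{-j}`, the conditional law of `Y` given `(X, X̃)` is a kernel
applied to `X_{-j}` alone. Swapping `X_j` with `X̃_j` fixes `X_{-j}` and preserves the law of
`(X, X̃)`, so it also preserves the joint law of `((X, X̃), Y)`. A swap of `S` is the composite of
the single swaps of its elements.
-/

open MeasureTheory ProbabilityTheory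

/-- The swap operation: exchange the coordinate `inl j` (original) with `inr j` (knockoff)
for each `j ∈ S`. -/
def knockoffSwap {p : ℕ} (S : Finset (Fin p)) (v : (Fin p ⊕ Fin p) → ℝ) :
    (Fin p ⊕ Fin p) → ℝ :=
  Sum.elim (fun j => if j ∈ S then v (Sum.inr j) else v (Sum.inl j))
    (fun j => if j ∈ S then v (Sum.inl j) else v (Sum.inr j))

namespace ProbabilityTheory

variable {Ω 𝓧 𝓦 𝓨 𝓩 : Type*} {mΩ : MeasurableSpace Ω} {m𝓧 : MeasurableSpace 𝓧}
  {m𝓦 : MeasurableSpace 𝓦} {m𝓨 : MeasurableSpace 𝓨} {m𝓩 : MeasurableSpace 𝓩}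
  {μ : Measure Ω} {X : Ω → 𝓧} {W : Ω → 𝓦} {Y : Ω → 𝓨}

lemma hasCondDistrib_condDistrib [StandardBorelSpace 𝓨] [Nonempty 𝓨] [IsFiniteMeasure μ]
    (hY : AEMeasurable Y μ) (hX : AEMeasurable X μ) :
    HasCondDistrib Y X (condDistrib Y X μ) μ :=
  ⟨by fun_prop, (compProd_map_condDistrib hY).symm⟩

lemma HasCondDistrib.prodMk_of_condIndepFun [StandardBorelSpace Ω] [IsFiniteMeasure μ]
    [StandardBorelSpace 𝓦] [Nonempty 𝓦] [StandardBorelSpace 𝓨] [Nonempty 𝓨]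
    {κ : Kernel 𝓧 𝓨} [IsFiniteKernel κ] (hX : Measurable X) (hW : Measurable W)
    (hY : Measurable Y) (h : HasCondDistrib Y X κ μ) (hWY : W ⟂ᵢ[X, hX; μ] Y) :
    HasCondDistrib Y (fun ω ↦ (X ω, W ω)) (κ.prodMkRight 𝓦) μ := by
  have hXW : Measurable fun ω ↦ (X ω, W ω) := hX.prodMk hW
  have hcond := (condIndepFun_iff_condDistrib_prod_ae_eq_prodMkRight hY hW hX).1 hWY
  have hκ : condDistrib Y X μ =ᵐ[μ.map X] κ :=
    condDistrib_ae_eq_of_measure_eq_compProd X hY.aemeasurable h.map_eq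
  have hκ' : (condDistrib Y X μ).prodMkRight 𝓦 =ᵐ[μ.map fun ω ↦ (X ω, W ω)] κ.prodMkRight 𝓦 := by
    have hmarg : μ.map X = (μ.map fun ω ↦ (X ω, W ω)).map Prod.fst := by
      rw [Measure.map_map measurable_fst hXW]; rfl
    rw [hmarg] at hκ
    exact ae_of_ae_map measurable_fst.aemeasurable hκ
  exact ⟨by fun_prop,
    (condDistrib_ae_eq_iff_measure_eq_compProd _ hY.aemeasurable _).1 (hcond.trans hκ')⟩

lemma HasCondDistrib.map_prodMap_eq_self [SFinite μ] {κ : Kernel 𝓩 𝓨} [IsSFiniteKernel κ]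
    {π : 𝓧 → 𝓩} {hπ : Measurable π} {T : 𝓧 → 𝓧} (hT : Measurable T)
    (h : HasCondDistrib Y X (κ.comap π hπ) μ) (hπT : π ∘ T = π)
    (hlaw : μ.map (T ∘ X) = μ.map X) :
    (μ.map fun ω ↦ (X ω, Y ω)).map (Prod.map T id) = μ.map fun ω ↦ (X ω, Y ω) := by
  have hTX : HasCondDistrib Y (T ∘ X) (κ.comap π hπ) μ :=
    HasCondDistrib.comp_right (hf := hT) (by
      convert h using 2
      exact Kernel.ext fun x ↦ congrArg κ (congrFun hπT x))
  calc (μ.map fun ω ↦ (X ω, Y ω)).map (Prod.map T id)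
      = μ.map fun ω ↦ ((T ∘ X) ω, Y ω) := by
        rw [AEMeasurable.map_map_of_aemeasurable (by fun_prop) h.aemeasurable]; rfl
    _ = μ.map fun ω ↦ (X ω, Y ω) := by rw [hTX.map_eq, hlaw, h.map_eq]

end ProbabilityTheory

section Coordinates

variable {ι κ α : Type*}

lemma measurable_sumElim [MeasurableSpace α] :
    Measurable fun q : (ι → α) × (κ → α) ↦ Sum.elim q.1 q.2 :=
  (MeasurableEquiv.sumPiEquivProdPi fun _ ↦ α).symm.measurable

variable [DecidableEq ι]

def insertCoord (j : ι) (q : ({i // i ≠ j} → α) × α) : ι → α :=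
  fun i ↦ if h : i = j then q.2 else q.1 ⟨i, h⟩

lemma measurable_insertCoord [MeasurableSpace α] (j : ι) : Measurable (insertCoord (α := α) j) := by
  refine measurable_pi_lambda _ fun i ↦ ?_
  by_cases h : i = j
  · simpa [insertCoord, h] using measurable_snd
  · simp only [insertCoord, h, ↓reduceDIte]
    exact (measurable_pi_apply _).comp measurable_fst

lemma insertCoord_restrict (j : ι) (x : ι → α) :
    insertCoord j (fun i : {i // i ≠ j} ↦ x i, x j) = x := by
  funext i
  by_cases h : i = j
  · subst h; simp [insertCoord]
  · simp [insertCoord, h]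

lemma restrict_insertCoord (j : ι) (q : ({i // i ≠ j} → α) × α) :
    (fun i : {i // i ≠ j} ↦ insertCoord j q i) = q.1 := by
  funext i
  simp [insertCoord, i.2]

end Coordinates

section KnockoffSwap

variable {p : ℕ}

lemma knockoffSwap_empty : knockoffSwap (∅ : Finset (Fin p)) = id := by
  funext v c; rcases c with i | i <;> simp [knockoffSwap]

lemma knockoffSwap_insert {j : Fin p} {S : Finset (Fin p)} (hj : j ∉ S) :
    knockoffSwap (insert j S) = knockoffSwap {j} ∘ knockoffSwap S := by
  funext v c
  rcases c with i | i <;> by_cases hij : i = j <;> simp_all [knockoffSwap]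

lemma measurable_knockoffSwap (S : Finset (Fin p)) : Measurable (knockoffSwap S) := by
  rw [measurable_pi_iff]
  rintro (i | i) <;>
    · simp only [knockoffSwap, Sum.elim_inl, Sum.elim_inr]
      split_ifs <;> exact measurable_pi_apply _

lemma knockoffSwap_singleton_inl_of_ne {i j : Fin p} (h : i ≠ j) (v : (Fin p ⊕ Fin p) → ℝ) :
    knockoffSwap {j} v (Sum.inl i) = v (Sum.inl i) := by
  simp [knockoffSwap, h]

lemma map_prodMap_knockoffSwap_eq_self {F : Type*} [MeasurableSpace F]
    {ν : Measure (((Fin p ⊕ Fin p) → ℝ) × F)} {S : Finset (Fin p)}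
    (h : ∀ j ∈ S, ν.map (Prod.map (knockoffSwap {j}) id) = ν) :
    ν.map (Prod.map (knockoffSwap S) id) = ν := by
  induction S using Finset.induction_on with
  | empty => rw [knockoffSwap_empty, Prod.map_id, Measure.map_id]
  | insert j S hj ih =>
    have hmeas := fun S ↦ (measurable_knockoffSwap (p := p) S).prodMap (measurable_id (α := F))
    have hcomp : Prod.map (knockoffSwap (insert j S)) (id : F → F)
        = Prod.map (knockoffSwap {j}) id ∘ Prod.map (knockoffSwap S) id := by
      rw [knockoffSwap_insert hj]; rfl
    rw [hcomp, ← Measure.map_map (hmeas _) (hmeas _),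
      ih fun k hk ↦ h k (Finset.mem_insert_of_mem hk), h j (Finset.mem_insert_self j S)]

end KnockoffSwap

theorem map_prodMap_knockoffSwap_singleton_eq_self
    {Ω : Type*} [MeasurableSpace Ω] [StandardBorelSpace Ω]
    {μ : Measure Ω} [IsProbabilityMeasure μ]
    {p : ℕ} {X Xt : Ω → Fin p → ℝ} {Y : Ω → ℝ}
    (hX : Measurable X) (hXt : Measurable Xt) (hY : Measurable Y) {j : Fin p}
    (hexch : μ.map (fun ω ↦ knockoffSwap {j} (Sum.elim (X ω) (Xt ω)))
      = μ.map (fun ω ↦ Sum.elim (X ω) (Xt ω)))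
    (hCI : Xt ⟂ᵢ[X, hX; μ] Y)
    (hXmj : Measurable fun ω ↦ fun i : {i : Fin p // i ≠ j} ↦ X ω i.1)
    (hnull : Y ⟂ᵢ[fun ω ↦ fun i : {i : Fin p // i ≠ j} ↦ X ω i.1, hXmj; μ] fun ω ↦ X ω j) :
    (μ.map fun ω ↦ (Sum.elim (X ω) (Xt ω), Y ω)).map (Prod.map (knockoffSwap {j}) id)
      = μ.map fun ω ↦ (Sum.elim (X ω) (Xt ω), Y ω) := by
  have hrestrict : Measurable fun (x : Fin p → ℝ) (i : {i : Fin p // i ≠ j}) ↦ x i.1 := by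
    fun_prop
  set η := condDistrib Y (fun ω ↦ fun i : {i : Fin p // i ≠ j} ↦ X ω i.1) μ
  have hnull' : HasCondDistrib Y (fun ω ↦ (fun i : {i : Fin p // i ≠ j} ↦ X ω i.1, X ω j))
      ((η.comap _ hrestrict).comap (insertCoord j) (measurable_insertCoord j)) μ := by
    have hη : (η.comap _ hrestrict).comap (insertCoord j) (measurable_insertCoord j)
        = η.prodMkRight ℝ := by
      ext q : 1
      rw [Kernel.comap_apply, Kernel.comap_apply, restrict_insertCoord, Kernel.prodMkRight_apply]
    rw [hη]
    exact (hasCondDistrib_condDistrib hY.aemeasurable hXmj.aemeasurable).prodMk_of_condIndepFun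
      hXmj ((measurable_pi_apply j).comp hX) hY hnull.symm
  have hX' : HasCondDistrib Y X (η.comap _ hrestrict) μ := by
    simpa [Function.comp_def, insertCoord_restrict] using hnull'.comp_right
  have hZ := HasCondDistrib.comp_right (hf := measurable_sumElim)
    (κ := η.comap (fun (v : (Fin p ⊕ Fin p) → ℝ) (i : {i : Fin p // i ≠ j}) ↦ v (Sum.inl i.1))
      (by fun_prop)) (hX'.prodMk_of_condIndepFun hX hXt hY hCI)
  exact hZ.map_prodMap_eq_self (measurable_knockoffSwap {j})
    (funext fun v ↦ funext fun i ↦ knockoffSwap_singleton_inl_of_ne i.2 v) hexch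

theorem null_swap_exchangeable_general
    {Ω : Type*} [MeasurableSpace Ω] [StandardBorelSpace Ω]
    {μ : Measure Ω} [IsProbabilityMeasure μ]
    {p : ℕ} (X Xt : Ω → Fin p → ℝ) (Y : Ω → ℝ)
    (hX : Measurable X) (hXt : Measurable Xt) (hY : Measurable Y)
    (hexch : ∀ S' : Finset (Fin p),
      μ.map (fun ω => knockoffSwap S' (Sum.elim (X ω) (Xt ω)))
        = μ.map (fun ω => Sum.elim (X ω) (Xt ω)))
    (hCI : CondIndepFun (MeasurableSpace.comap X inferInstance) hX.comap_le Xt Y μ)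
    (hXmj : ∀ j : Fin p, Measurable fun ω => fun i : {i : Fin p // i ≠ j} => X ω i.1)
    (S : Finset (Fin p))
    (hSnull : ∀ j ∈ S, CondIndepFun
      (MeasurableSpace.comap (fun ω => fun i : {i : Fin p // i ≠ j} => X ω i.1) inferInstance)
      (hXmj j).comap_le Y (fun ω => X ω j) μ) :
    μ.map (fun ω => (knockoffSwap S (Sum.elim (X ω) (Xt ω)), Y ω))
      = μ.map (fun ω => (Sum.elim (X ω) (Xt ω), Y ω)) := by
  have hZY : Measurable fun ω ↦ (Sum.elim (X ω) (Xt ω), Y ω) :=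
    (measurable_sumElim.comp (hX.prodMk hXt)).prodMk hY
  rw [← map_prodMap_knockoffSwap_eq_self (S := S) fun j hj ↦
    map_prodMap_knockoffSwap_singleton_eq_self hX hXt hY (hexch {j}) hCI (hXmj j) (hSnull j hj),
    Measure.map_map ((measurable_knockoffSwap S).prodMap measurable_id) hZY]
  rfl

/-- Lemma 3.2: if `X̃` is a model-free knockoff for `X` and `S` is any subset of null variables
(`j ∈ S ⇒ Y ⫫ X_j | X_{-j}`), then `((X, X̃)_{swap(S)}, Y) =_d ((X, X̃), Y)`. -/
theorem null_swap_exchangeable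
    {Ω : Type*} [MeasurableSpace Ω] [StandardBorelSpace Ω] [Nonempty Ω]
    {μ : Measure Ω} [IsProbabilityMeasure μ]
    {p : ℕ} (X Xt : Ω → Fin p → ℝ) (Y : Ω → ℝ)
    (hX : Measurable X) (hXt : Measurable Xt) (hY : Measurable Y)
    (hexch : ∀ S' : Finset (Fin p),
      μ.map (fun ω => knockoffSwap S' (Sum.elim (X ω) (Xt ω)))
        = μ.map (fun ω => Sum.elim (X ω) (Xt ω)))
    (hCI : CondIndepFun (MeasurableSpace.comap X inferInstance) hX.comap_le Xt Y μ)
    (hXmj : ∀ j : Fin p, Measurable fun ω => fun i : {i : Fin p // i ≠ j} => X ω i.1)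
    (S : Finset (Fin p))
    (hSnull : ∀ j ∈ S, CondIndepFun
      (MeasurableSpace.comap (fun ω => fun i : {i : Fin p // i ≠ j} => X ω i.1) inferInstance)
      (hXmj j).comap_le Y (fun ω => X ω j) μ) :
    μ.map (fun ω => (knockoffSwap S (Sum.elim (X ω) (Xt ω)), Y ω))
      = μ.map (fun ω => (Sum.elim (X ω) (Xt ω), Y ω)) :=
  null_swap_exchangeable_general X Xt Y hX hXt hY hexch hCI hXmj S hSnull
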